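/- Let S₁ = [[1,2],[0,1]] and S₂ = [[1,0],[2,1]] as real 2×2 matrices, and let γ = [[a,b],[b,c]] be a real symmetric 2×2 matrix. Then (1/4)·(S₁ γ S₁ᵀ + S₁⁻¹ γ (S₁⁻¹)ᵀ + S₂ γ S₂ᵀ + S₂⁻¹ γ (S₂⁻¹)ᵀ) = [[a + 2c, b], [b, c + 2a]]. Equivalently, averaging γ by congruence with the linear parts of the eight Margulis transformations, (1/8)·Σ_{T∈𝒮_ℝ} S_T γ S_Tᵀ (where S_T is the linear part of T), yields [[a + 2c, b], [b, c + 2a]]. -/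
import Mathlib


open BigOperators Matrix

noncomputable section

/-- `S₁ = [[1,2],[0,1]]` as a real matrix. -/
def S1 : Matrix (Fin 2) (Fin 2) ℝ := !![1, 2; 0, 1]

/-- `S₂ = [[1,0],[2,1]]` as a real matrix. -/
def S2 : Matrix (Fin 2) (Fin 2) ℝ := !![1, 0; 2, 1]

/-- The linear parts of the eight Margulis transformations
`T₁, T₂, T₃, T₄, T₁⁻¹, T₂⁻¹, T₃⁻¹, T₄⁻¹`: each of `S₁, S₂, S₁⁻¹, S₂⁻¹` occurs twice. -/
def linPart : Fin 8 → Matrix (Fin 2) (Fin 2) ℝ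
  | 0 => S1
  | 1 => S1
  | 2 => S2
  | 3 => S2
  | 4 => S1⁻¹
  | 5 => S1⁻¹
  | 6 => S2⁻¹
  | 7 => S2⁻¹

/-- averaging a symmetric matrix `γ = [[a,b],[b,c]]` by congruence with
`S₁, S₁⁻¹, S₂, S₂⁻¹` (equivalently, with the linear parts of the eight Margulis
transformations) yields `[[a+2c, b],[b, c+2a]]`. -/
theorem margulis_congruence_average (a b c : ℝ)
    (γ : Matrix (Fin 2) (Fin 2) ℝ) (hγ : γ = !![a, b; b, c]) :
    (1 / 4 : ℝ) • (S1 * γ * S1ᵀ + S1⁻¹ * γ * (S1⁻¹)ᵀ + S2 * γ * S2ᵀ + S2⁻¹ * γ * (S2⁻¹)ᵀ)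
        = !![a + 2 * c, b; b, c + 2 * a]
    ∧ (1 / 8 : ℝ) • ∑ i : Fin 8, linPart i * γ * (linPart i)ᵀ
        = !![a + 2 * c, b; b, c + 2 * a] := by
  have htr : ∀ x y z w : ℝ, (!![x, y; z, w])ᵀ = !![x, z; y, w] := by
    intro x y z w; ext i j; fin_cases i <;> fin_cases j <;> rfl
  have h1 : (!![1, 2; 0, 1] : Matrix (Fin 2) (Fin 2) ℝ)⁻¹ = !![1, -2; 0, 1] := by
    apply inv_eq_right_inv
    ext i j
    fin_cases i <;> fin_cases j <;>
      simp [Matrix.mul_apply, Fin.sum_univ_two, Matrix.one_apply]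
  have h2 : (!![1, 0; 2, 1] : Matrix (Fin 2) (Fin 2) ℝ)⁻¹ = !![1, 0; -2, 1] := by
    apply inv_eq_right_inv
    ext i j
    fin_cases i <;> fin_cases j <;>
      simp [Matrix.mul_apply, Fin.sum_univ_two, Matrix.one_apply]
  subst hγ
  constructor <;>
  · simp only [Fin.sum_univ_eight, linPart, S1, S2, h1, h2, htr, Matrix.mul_fin_two]
    ext i j
    fin_cases i <;> fin_cases j <;>
      · simp [Matrix.smul_apply, Matrix.add_apply]
        ring
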